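/- For a disc preserving Möbius transformation F that is not a rotation, written in normalized form with off-diagonal entry β, the length of the expansion interval V of F⁻¹ equals 2·arccos(|β|/√(1+|β|²)). -/

import Mathlib

open Complex Real Set MeasureTheory

/-- The inverse of the disc preserving Möbius transformation with normalized matrix
`[[α, β], [conj β, conj α]]`; it has matrix `[[conj α, -β], [-conj β, α]]`. -/
noncomputable def discMTinv (α β : ℂ) : ℂ → ℂ :=
  fun z => ((starRingEnd ℂ) α * z - β) / (-(starRingEnd ℂ) β * z + α)

/-- The expansion interval `V = {x ∈ 𝕋 : |(F⁻¹)'(x)| > 1}`. -/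
noncomputable def expInt (α β : ℂ) : Set ℂ :=
  {x : ℂ | ‖x‖ = 1 ∧ 1 < ‖deriv (discMTinv α β) x‖}

/-- The arc length of a subset of the unit circle. -/
noncomputable def arcLength (S : Set ℂ) : ENNReal :=
  volume {θ : ℝ | θ ∈ Ico 0 (2 * π) ∧ Complex.exp (θ * Complex.I) ∈ S}


lemma cos_set_meas (c t : ℝ) (hc0 : 0 ≤ c) (hc2 : c < 2*π) (ht0 : 0 < t) (ht1 : t < 1) :
    volume {θ : ℝ | θ ∈ Ico 0 (2*π) ∧ t < Real.cos (θ - c - π)} =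
      ENNReal.ofReal (2 * Real.arccos t) := by
  have hπ : 0 < π := Real.pi_pos
  set a := Real.arccos t with ha
  have ha0 : 0 < a := Real.arccos_pos.2 ht1
  have ha2 : a < π/2 := Real.arccos_lt_pi_div_two.2 ht0
  have hcos : Real.cos a = t := Real.cos_arccos (by linarith) (by linarith)
  -- sets
  set P : ℝ → Prop := fun θ => t < Real.cos (θ - c - π) with hP
  have hPm : MeasurableSet {θ : ℝ | P θ} := by
    apply measurableSet_lt measurable_const
    exact (Real.continuous_cos.comp (by continuity)).measurable
  set S1 : Set ℝ := Ico 0 c ∩ {θ | P θ} with hS1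
  set S2 : Set ℝ := Ico c (2*π) ∩ {θ | P θ} with hS2
  set S1' : Set ℝ := Ico (2*π) (2*π + c) ∩ {θ | P θ} with hS1'
  have hsplit : {θ : ℝ | θ ∈ Ico 0 (2*π) ∧ P θ} = S1 ∪ S2 := by
    rw [hS1, hS2, ← Set.union_inter_distrib_right,
      Set.Ico_union_Ico_eq_Ico hc0 (le_of_lt hc2)]
    rfl
  have htrans : volume S1 = volume S1' := by
    have hpre : S1' = (fun θ => θ + (-(2*π))) ⁻¹' S1 := by
      ext θ
      simp only [hS1, hS1', Set.mem_inter_iff, Set.mem_preimage, Set.mem_Ico, Set.mem_setOf_eq, hP]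
      constructor
      · rintro ⟨⟨h1, h2⟩, h3⟩
        refine ⟨⟨by linarith, by linarith⟩, ?_⟩
        have : θ + -(2*π) - c - π = (θ - c - π) + (-1 : ℤ) * (2*π) := by push_cast; ring
        rw [this, Real.cos_add_int_mul_two_pi]; exact h3
      · rintro ⟨⟨h1, h2⟩, h3⟩
        refine ⟨⟨by linarith, by linarith⟩, ?_⟩
        have : θ + -(2*π) - c - π = (θ - c - π) + (-1 : ℤ) * (2*π) := by push_cast; ring
        rw [this, Real.cos_add_int_mul_two_pi] at h3; exact h3
    rw [hpre, measure_preimage_add_right]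
  have hdisj : Disjoint S2 S1' := by
    apply Set.disjoint_left.2
    rintro θ ⟨⟨_, h2⟩, _⟩ ⟨⟨h3, _⟩, _⟩
    linarith
  have hm2 : MeasurableSet S2 := measurableSet_Ico.inter hPm
  have hm1' : MeasurableSet S1' := measurableSet_Ico.inter hPm
  have hunion : S2 ∪ S1' = Ico c (2*π + c) ∩ {θ | P θ} := by
    rw [hS2, hS1', ← Set.union_inter_distrib_right,
      Set.Ico_union_Ico_eq_Ico (le_of_lt hc2) (by linarith)]
  have hIoo : Ico c (2*π + c) ∩ {θ | P θ} = Ioo (c + π - a) (c + π + a) := by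
    ext θ
    simp only [Set.mem_inter_iff, Set.mem_Ico, Set.mem_Ioo, Set.mem_setOf_eq, hP]
    constructor
    · rintro ⟨⟨h1, h2⟩, h3⟩
      set ψ := θ - c - π with hψ
      have hψ1 : -π ≤ ψ := by simp [hψ]; linarith
      have hψ2 : ψ < π := by simp [hψ]; linarith
      constructor
      · by_contra hcon
        push_neg at hcon
        have hψa : ψ ≤ -a := by linarith
        have : Real.cos (-ψ) ≤ Real.cos a := by
          apply cos_le_cos_of_nonneg_of_le_pi (le_of_lt ha0) (by linarith) (by linarith)
        rw [Real.cos_neg, hcos] at this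
        linarith
      · by_contra hcon
        push_neg at hcon
        have hψa : a ≤ ψ := by linarith
        have : Real.cos ψ ≤ Real.cos a :=
          cos_le_cos_of_nonneg_of_le_pi (le_of_lt ha0) (le_of_lt hψ2) hψa
        rw [hcos] at this
        linarith
    · rintro ⟨h1, h2⟩
      set ψ := θ - c - π with hψ
      have hψa : |ψ| < a := abs_lt.2 ⟨by simp [hψ]; linarith, by simp [hψ]; linarith⟩
      refine ⟨⟨by linarith, by linarith⟩, ?_⟩
      have : Real.cos a < Real.cos |ψ| :=
        cos_lt_cos_of_nonneg_of_le_pi (abs_nonneg ψ) (by linarith) hψa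
      rw [hcos, Real.cos_abs] at this
      exact this
  calc volume {θ : ℝ | θ ∈ Ico 0 (2*π) ∧ P θ}
      = volume S1 + volume S2 := by
        rw [hsplit]
        rw [measure_union ?_ hm2]
        · exact Set.disjoint_left.2 (by rintro θ ⟨⟨_, h2⟩, _⟩ ⟨⟨h3, _⟩, _⟩; linarith)
    _ = volume S2 + volume S1' := by rw [htrans, add_comm]
    _ = volume (S2 ∪ S1') := (measure_union hdisj hm1').symm
    _ = ENNReal.ofReal (2 * a) := by
        rw [hunion, hIoo, Real.volume_Ioo]
        congr 1; ring


lemma denom_ne (α β : ℂ) (h : ‖α‖ ^ 2 - ‖β‖ ^ 2 = 1) {x : ℂ} (hx : ‖x‖ = 1) :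
    -(starRingEnd ℂ) β * x + α ≠ 0 := by
  intro hzero
  have hα : α = (starRingEnd ℂ) β * x := by linear_combination hzero
  have : ‖α‖ = ‖β‖ := by rw [hα, norm_mul, RCLike.norm_conj, hx, mul_one]
  rw [this] at h; simp at h

lemma myderiv (α β : ℂ) (h : ‖α‖ ^ 2 - ‖β‖ ^ 2 = 1) {x : ℂ} (hx : ‖x‖ = 1) :
    deriv (discMTinv α β) x = 1 / (-(starRingEnd ℂ) β * x + α) ^ 2 := by
  have hd := denom_ne α β h hx
  have hf : DifferentiableAt ℂ (fun z : ℂ => (starRingEnd ℂ) α * z - β) x := by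
    fun_prop
  have hg : DifferentiableAt ℂ (fun z : ℂ => -(starRingEnd ℂ) β * z + α) x := by
    fun_prop
  have := deriv_div hf hg hd
  show deriv (fun z => ((starRingEnd ℂ) α * z - β) / (-(starRingEnd ℂ) β * z + α)) x = _
  rw [show (fun z => ((starRingEnd ℂ) α * z - β) / (-(starRingEnd ℂ) β * z + α)) = (fun z : ℂ => (starRingEnd ℂ) α * z - β) / (fun z : ℂ => -(starRingEnd ℂ) β * z + α) from rfl, this]
  have h1 : deriv (fun z : ℂ => (starRingEnd ℂ) α * z - β) x = (starRingEnd ℂ) α := by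
    have := (((hasDerivAt_id x).const_mul ((starRingEnd ℂ) α)).sub_const β).deriv
    simpa using this
  have h2 : deriv (fun z : ℂ => -(starRingEnd ℂ) β * z + α) x = -(starRingEnd ℂ) β := by
    have := (((hasDerivAt_id x).const_mul (-(starRingEnd ℂ) β)).add_const α).deriv
    simpa using this
  rw [h1, h2]
  congr 1
  have hnum : (starRingEnd ℂ) α * (-(starRingEnd ℂ) β * x + α) -
      ((starRingEnd ℂ) α * x - β) * -(starRingEnd ℂ) β
      = (starRingEnd ℂ) α * α - β * (starRingEnd ℂ) β := by ring
  rw [hnum]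
  have hα : (starRingEnd ℂ) α * α = (Complex.normSq α : ℂ) := by
    rw [mul_comm, Complex.mul_conj]
  have hβ : β * (starRingEnd ℂ) β = (Complex.normSq β : ℂ) := Complex.mul_conj β
  rw [hα, hβ]
  rw [← Complex.ofReal_sub]
  have : Complex.normSq α - Complex.normSq β = 1 := by
    rw [Complex.normSq_eq_norm_sq, Complex.normSq_eq_norm_sq]
    exact h
  rw [this, Complex.ofReal_one]

lemma mem_iff (α β : ℂ) (h : ‖α‖ ^ 2 - ‖β‖ ^ 2 = 1) {x : ℂ} (hx : ‖x‖ = 1) :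
    (1 < ‖deriv (discMTinv α β) x‖) ↔ ‖β‖ ^ 2 < (α * β * (starRingEnd ℂ) x).re := by
  rw [myderiv α β h hx]
  have hd := denom_ne α β h hx
  have hpos : 0 < ‖-(starRingEnd ℂ) β * x + α‖ ^ 2 := by
    have := norm_pos_iff.2 hd
    positivity
  rw [norm_div, norm_one, norm_pow, lt_div_iff₀ hpos, one_mul]
  have hsq : ‖-(starRingEnd ℂ) β * x + α‖ ^ 2 = Complex.normSq (α - (starRingEnd ℂ) β * x) := by
    rw [Complex.sq_norm]
    congr 1; ring
  rw [hsq, Complex.normSq_sub]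
  have hrw : (α * (starRingEnd ℂ) ((starRingEnd ℂ) β * x)).re = (α * β * (starRingEnd ℂ) x).re := by
    rw [map_mul, Complex.conj_conj]
    ring_nf
  have hx2 : Complex.normSq ((starRingEnd ℂ) β * x) = ‖β‖ ^ 2 := by
    rw [Complex.normSq_mul, Complex.normSq_conj]
    have : Complex.normSq x = 1 := by
      rw [← Complex.sq_norm, hx]; norm_num
    rw [this, mul_one, ← Complex.sq_norm]
  have hα2 : Complex.normSq α = ‖α‖ ^ 2 := by
    rw [← Complex.sq_norm]
  rw [hrw, hx2, hα2]
  constructor <;> intro hlt <;> nlinarith [hlt]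

lemma re_mul_conj_exp (w : ℂ) (θ : ℝ) :
    (w * (starRingEnd ℂ) (Complex.exp (θ * Complex.I))).re
      = ‖w‖ * Real.cos (θ - Complex.arg w) := by
  have h1 : (starRingEnd ℂ) (Complex.exp (θ * Complex.I))
      = Complex.exp ((-θ : ℝ) * Complex.I) := by
    rw [← Complex.exp_conj, map_mul, Complex.conj_ofReal, Complex.conj_I]
    push_cast; ring_nf
  rw [h1]
  nth_rewrite 1 [← Complex.norm_mul_exp_arg_mul_I w]
  rw [mul_assoc, ← Complex.exp_add]
  have h2 : (Complex.arg w : ℂ) * Complex.I + (-θ : ℝ) * Complex.I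
      = ((Complex.arg w - θ : ℝ) : ℂ) * Complex.I := by push_cast; ring
  rw [h2, Complex.re_ofReal_mul, Complex.exp_ofReal_mul_I_re, ← Real.cos_neg, neg_sub]

/-- for a non-rotation disc preserving Möbius transformation with off-diagonal
entry `β`, the length of the expansion interval of `F⁻¹` is `2·arccos(|β|/√(1+|β|²))`. -/
theorem stmt_5 (α β : ℂ) (h : ‖α‖ ^ 2 - ‖β‖ ^ 2 = 1) (hβ : β ≠ 0) :
    arcLength (expInt α β) =
      ENNReal.ofReal (2 * Real.arccos (‖β‖ / Real.sqrt (1 + ‖β‖ ^ 2))) := by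
  have hπ : 0 < π := Real.pi_pos
  have hβ0 : 0 < ‖β‖ := norm_pos_iff.2 hβ
  have hα0 : 0 < ‖α‖ := by
    rcases (norm_nonneg α).lt_or_eq with h' | h'
    · exact h'
    · exfalso; rw [← h'] at h; nlinarith [sq_nonneg ‖β‖]
  have hβα : ‖β‖ < ‖α‖ := by nlinarith
  set t : ℝ := ‖β‖ / ‖α‖ with ht
  have ht0 : 0 < t := div_pos hβ0 hα0
  have ht1 : t < 1 := (div_lt_one hα0).2 hβα
  have hαsqrt : Real.sqrt (1 + ‖β‖ ^ 2) = ‖α‖ := by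
    have : 1 + ‖β‖ ^ 2 = ‖α‖ ^ 2 := by linarith
    rw [this, Real.sqrt_sq (le_of_lt hα0)]
  set φ : ℝ := Complex.arg (α * β) with hφ
  set n : ℤ := ⌊(φ - π) / (2 * π)⌋ with hn
  set c : ℝ := (φ - π) - n * (2 * π) with hc
  have hc0 : 0 ≤ c := Int.sub_floor_div_mul_nonneg (φ - π) (by linarith)
  have hc2 : c < 2 * π := Int.sub_floor_div_mul_lt (φ - π) (by linarith)
  have hseteq : {θ : ℝ | θ ∈ Ico 0 (2*π) ∧ Complex.exp (θ * Complex.I) ∈ expInt α β}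
      = {θ : ℝ | θ ∈ Ico 0 (2*π) ∧ t < Real.cos (θ - c - π)} := by
    ext θ
    simp only [Set.mem_setOf_eq, expInt, and_congr_right_iff]
    intro _
    have hx : ‖Complex.exp ((θ : ℂ) * Complex.I)‖ = 1 := by
      rw [Complex.norm_exp_ofReal_mul_I]
    rw [and_iff_right hx, mem_iff α β h hx, re_mul_conj_exp]
    have habs : ‖α * β‖ = ‖α‖ * ‖β‖ := by
      rw [norm_mul]
    have hcosshift : Real.cos (θ - φ) = Real.cos (θ - c - π) := by
      have : θ - φ = (θ - c - π) + (-n : ℤ) * (2 * π) := by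
        rw [hc]; push_cast; ring
      rw [this, Real.cos_add_int_mul_two_pi]
    rw [habs, hcosshift]
    rw [ht, div_lt_iff₀ hα0]
    constructor
    · intro hlt; nlinarith
    · intro hlt; nlinarith
  rw [arcLength, hseteq, cos_set_meas c t hc0 hc2 ht0 ht1, hαsqrt]
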